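/- Assume f attains its minimum on ℝⁿ. Let ρ > 0, σ > 0, κ ∈ (0,1), let L > 0 satisfy D_f(a,b) ≤ L · D_ψ(a,b) for all a, b ∈ ℝⁿ, and let γ > 0 satisfy γ·L ≤ 1 − κ and γ·σ ≤ 1. Assume the local relative strong convexity bound D_f(x̄,x) ≥ σ · D_ψ(x̄,x) for all x in the closed ball B(x̄,ρ) = {x : ‖x − x̄‖ ≤ ρ}. If x_k ∈ B(x̄,ρ) and x_{k+1} satisfies the mirror-descent update (‖x_{k+1}‖² + 1)x_{k+1} = (‖x_k‖² + 1)x_k − γ·∇f(x_k), then D_ψ(x̄,x_{k+1}) ≤ (1 − γσ) · D_ψ(x̄,x_k) + γ·‖ε‖²/m. -/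

import Mathlib

open scoped RealInnerProductSpace BigOperators

noncomputable def phaseObj (m n : ℕ) (a : Fin m → EuclideanSpace ℝ (Fin n))
    (xbar : EuclideanSpace ℝ (Fin n)) (ε : Fin m → ℝ)
    (x : EuclideanSpace ℝ (Fin n)) : ℝ :=
  (1 / (4 * (m : ℝ))) * ∑ r, (⟪a r, x⟫ ^ 2 - ⟪a r, xbar⟫ ^ 2) ^ 2
    - (1 / (2 * (m : ℝ))) * ∑ r, ε r * (⟪a r, x⟫ ^ 2 - ⟪a r, xbar⟫ ^ 2)
    + (∑ r, ε r ^ 2) / (4 * (m : ℝ))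

noncomputable def phaseGrad (m n : ℕ) (a : Fin m → EuclideanSpace ℝ (Fin n))
    (xbar : EuclideanSpace ℝ (Fin n)) (ε : Fin m → ℝ)
    (x : EuclideanSpace ℝ (Fin n)) : EuclideanSpace ℝ (Fin n) :=
  (1 / (m : ℝ)) • ∑ r, ((⟪a r, x⟫ ^ 2 - ⟪a r, xbar⟫ ^ 2 - ε r) * ⟪a r, x⟫) • a r

noncomputable def entropy (n : ℕ) (x : EuclideanSpace ℝ (Fin n)) : ℝ :=
  (1 / 4) * ‖x‖ ^ 4 + (1 / 2) * ‖x‖ ^ 2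

noncomputable def entropyGrad (n : ℕ) (x : EuclideanSpace ℝ (Fin n)) :
    EuclideanSpace ℝ (Fin n) :=
  (‖x‖ ^ 2 + 1) • x

/-- Bregman divergence of the noisy phase-retrieval objective `f`. -/
noncomputable def Df (m n : ℕ) (a : Fin m → EuclideanSpace ℝ (Fin n))
    (xbar : EuclideanSpace ℝ (Fin n)) (ε : Fin m → ℝ)
    (x z : EuclideanSpace ℝ (Fin n)) : ℝ :=
  phaseObj m n a xbar ε x - phaseObj m n a xbar ε z - ⟪phaseGrad m n a xbar ε z, x - z⟫

/-- Bregman divergence of the entropy `ψ`. -/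
noncomputable def Dψ (n : ℕ) (x z : EuclideanSpace ℝ (Fin n)) : ℝ :=
  entropy n x - entropy n z - ⟪entropyGrad n z, x - z⟫

/-!
Write `x⁺` for the new iterate. The three-point identity for Bregman divergences and the mirror
step `∇ψ(x) - ∇ψ(x⁺) = γ ∇f(x)` give
`D_ψ(x̄,x⁺) = D_ψ(x̄,x) - D_ψ(x⁺,x) + γ (f x̄ - f x⁺ - D_f(x̄,x) + D_f(x⁺,x))`.
Relative smoothness with `γ L ≤ 1` absorbs `γ D_f(x⁺,x)` into `D_ψ(x⁺,x)`, local relative strong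
convexity bounds `D_f(x̄,x)` from below, and since `f` is a mean of squares, `f ≥ 0` while
`f x̄ = ‖ε‖² / (4m)`.
-/

section Bregman

variable {E : Type*} [NormedAddCommGroup E] [InnerProductSpace ℝ E]

noncomputable def bregmanDiv (φ : E → ℝ) (dφ : E → E) (x z : E) : ℝ :=
  φ x - φ z - ⟪dφ z, x - z⟫

theorem bregmanDiv_three_point (φ : E → ℝ) (dφ : E → E) (y x x' : E) :
    bregmanDiv φ dφ y x' =
      bregmanDiv φ dφ y x - bregmanDiv φ dφ x' x + ⟪dφ x - dφ x', y - x'⟫ := by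
  simp only [bregmanDiv, inner_sub_left, inner_sub_right]
  ring

theorem inner_sub_eq_bregmanDiv (f : E → ℝ) (df : E → E) (y x x' : E) :
    ⟪df x, y - x'⟫ = f y - f x' - bregmanDiv f df y x + bregmanDiv f df x' x := by
  simp only [bregmanDiv, inner_sub_right]
  ring

theorem bregmanDiv_mirrorStep_le {φ f : E → ℝ} {dφ df : E → E} {x x' y : E} {γ σ L : ℝ}
    (hstep : dφ x' = dφ x - γ • df x) (hγ : 0 ≤ γ) (hγL : γ * L ≤ 1)
    (hsmooth : bregmanDiv f df x' x ≤ L * bregmanDiv φ dφ x' x)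
    (hφ : 0 ≤ bregmanDiv φ dφ x' x)
    (hconvex : σ * bregmanDiv φ dφ y x ≤ bregmanDiv f df y x) :
    bregmanDiv φ dφ y x' ≤ (1 - γ * σ) * bregmanDiv φ dφ y x + γ * (f y - f x') := by
  have hdiff : dφ x - dφ x' = γ • df x := by rw [hstep]; abel
  rw [bregmanDiv_three_point φ dφ y x x', hdiff, real_inner_smul_left,
    inner_sub_eq_bregmanDiv f df y x x']
  linarith [mul_le_mul_of_nonneg_left hsmooth hγ, mul_le_mul_of_nonneg_right hγL hφ,
    mul_le_mul_of_nonneg_left hconvex hγ]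

end Bregman

theorem Dψ_eq_bregmanDiv (n : ℕ) : Dψ n = bregmanDiv (entropy n) (entropyGrad n) := rfl

theorem Df_eq_bregmanDiv (m n : ℕ) (a : Fin m → EuclideanSpace ℝ (Fin n))
    (xbar : EuclideanSpace ℝ (Fin n)) (ε : Fin m → ℝ) :
    Df m n a xbar ε = bregmanDiv (phaseObj m n a xbar ε) (phaseGrad m n a xbar ε) := rfl

theorem Dψ_nonneg (n : ℕ) (x z : EuclideanSpace ℝ (Fin n)) : 0 ≤ Dψ n x z := by
  -- Cauchy–Schwarz reduces this to the convexity of `t ↦ t⁴/4 + t²/2` on `[0, ∞)`.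
  have hcs : (‖z‖ ^ 2 + 1) * ⟪z, x⟫ ≤ (‖z‖ ^ 2 + 1) * (‖z‖ * ‖x‖) :=
    mul_le_mul_of_nonneg_left (real_inner_le_norm z x) (by positivity)
  have hquartic : 0 ≤ (‖x‖ - ‖z‖) ^ 2 * (‖x‖ ^ 2 + 2 * ‖x‖ * ‖z‖ + 3 * ‖z‖ ^ 2) := by
    positivity
  simp only [Dψ, entropy, entropyGrad, real_inner_smul_left, inner_sub_right,
    real_inner_self_eq_norm_sq]
  linarith [sq_nonneg (‖x‖ - ‖z‖)]

theorem phaseObj_eq_sum_sq (m n : ℕ) (a : Fin m → EuclideanSpace ℝ (Fin n))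
    (xbar : EuclideanSpace ℝ (Fin n)) (ε : Fin m → ℝ) (x : EuclideanSpace ℝ (Fin n)) :
    phaseObj m n a xbar ε x =
      (1 / (4 * (m : ℝ))) * ∑ r, (⟪a r, x⟫ ^ 2 - ⟪a r, xbar⟫ ^ 2 - ε r) ^ 2 := by
  have hexpand : ∑ r, (⟪a r, x⟫ ^ 2 - ⟪a r, xbar⟫ ^ 2 - ε r) ^ 2 =
      ∑ r, (⟪a r, x⟫ ^ 2 - ⟪a r, xbar⟫ ^ 2) ^ 2
        - 2 * ∑ r, ε r * (⟪a r, x⟫ ^ 2 - ⟪a r, xbar⟫ ^ 2) + ∑ r, ε r ^ 2 := by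
    rw [Finset.mul_sum, ← Finset.sum_sub_distrib, ← Finset.sum_add_distrib]
    exact Finset.sum_congr rfl fun r _ => by ring
  rw [phaseObj, hexpand]
  ring

theorem phaseObj_nonneg (m n : ℕ) (a : Fin m → EuclideanSpace ℝ (Fin n))
    (xbar : EuclideanSpace ℝ (Fin n)) (ε : Fin m → ℝ) (x : EuclideanSpace ℝ (Fin n)) :
    0 ≤ phaseObj m n a xbar ε x := by
  rw [phaseObj_eq_sum_sq]
  positivity

theorem phaseObj_self (m n : ℕ) (a : Fin m → EuclideanSpace ℝ (Fin n))
    (xbar : EuclideanSpace ℝ (Fin n)) (ε : Fin m → ℝ) :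
    phaseObj m n a xbar ε xbar = (∑ r, ε r ^ 2) / (4 * (m : ℝ)) := by
  simp [phaseObj]

theorem stmt3_general (n m : ℕ) (a : Fin m → EuclideanSpace ℝ (Fin n))
    (xbar : EuclideanSpace ℝ (Fin n)) (ε : Fin m → ℝ)
    (ρ σ κ : ℝ) (hκ0 : 0 < κ)
    (L : ℝ)
    (hL : ∀ p q : EuclideanSpace ℝ (Fin n), Df m n a xbar ε p q ≤ L * Dψ n p q)
    (γ : ℝ) (hγ : 0 < γ) (hγL : γ * L ≤ 1 - κ)
    (hsc : ∀ x ∈ Metric.closedBall xbar ρ, Df m n a xbar ε xbar x ≥ σ * Dψ n xbar x)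
    (xk xkp : EuclideanSpace ℝ (Fin n)) (hxk : xk ∈ Metric.closedBall xbar ρ)
    (hupdate : (‖xkp‖ ^ 2 + 1) • xkp = (‖xk‖ ^ 2 + 1) • xk - γ • phaseGrad m n a xbar ε xk) :
    Dψ n xbar xkp ≤ (1 - γ * σ) * Dψ n xbar xk + γ * (∑ r, ε r ^ 2) / m := by
  rw [Df_eq_bregmanDiv] at hL hsc
  rw [Dψ_eq_bregmanDiv] at hL hsc ⊢
  have hmirror : entropyGrad n xkp = entropyGrad n xk - γ • phaseGrad m n a xbar ε xk := hupdate
  have hstep := bregmanDiv_mirrorStep_le (y := xbar) hmirror hγ.le (by linarith) (hL xkp xk)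
    (Dψ_nonneg n xkp xk) (hsc xk hxk)
  rw [phaseObj_self] at hstep
  have hnoise : γ * ((∑ r, ε r ^ 2) / (4 * (m : ℝ)) - phaseObj m n a xbar ε xkp) ≤
      γ * (∑ r, ε r ^ 2) / m := by
    have hfx := mul_nonneg hγ.le (phaseObj_nonneg m n a xbar ε xkp)
    have hS : 0 ≤ γ * (∑ r, ε r ^ 2) / m := by positivity
    calc γ * ((∑ r, ε r ^ 2) / (4 * (m : ℝ)) - phaseObj m n a xbar ε xkp)
        = γ * (∑ r, ε r ^ 2) / m / 4 - γ * phaseObj m n a xbar ε xkp := by ring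
      _ ≤ γ * (∑ r, ε r ^ 2) / m := by linarith
  linarith

/-- one-step linear convergence of `D_ψ(x̄,·)` up to a noise term. -/
theorem stmt3 (n m : ℕ) (hm : 1 ≤ m) (a : Fin m → EuclideanSpace ℝ (Fin n))
    (xbar : EuclideanSpace ℝ (Fin n)) (ε : Fin m → ℝ)
    (hattain : ∃ xstar : EuclideanSpace ℝ (Fin n),
      ∀ x : EuclideanSpace ℝ (Fin n), phaseObj m n a xbar ε xstar ≤ phaseObj m n a xbar ε x)
    (ρ σ κ : ℝ) (hρ : 0 < ρ) (hσ : 0 < σ) (hκ0 : 0 < κ) (hκ1 : κ < 1)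
    (L : ℝ) (hLpos : 0 < L)
    (hL : ∀ p q : EuclideanSpace ℝ (Fin n), Df m n a xbar ε p q ≤ L * Dψ n p q)
    (γ : ℝ) (hγ : 0 < γ) (hγL : γ * L ≤ 1 - κ) (hγσ : γ * σ ≤ 1)
    (hsc : ∀ x ∈ Metric.closedBall xbar ρ, Df m n a xbar ε xbar x ≥ σ * Dψ n xbar x)
    (xk xkp : EuclideanSpace ℝ (Fin n)) (hxk : xk ∈ Metric.closedBall xbar ρ)
    (hupdate : (‖xkp‖ ^ 2 + 1) • xkp = (‖xk‖ ^ 2 + 1) • xk - γ • phaseGrad m n a xbar ε xk) :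
    Dψ n xbar xkp ≤ (1 - γ * σ) * Dψ n xbar xk + γ * (∑ r, ε r ^ 2) / m :=
  stmt3_general n m a xbar ε ρ σ κ hκ0 L hL γ hγ hγL hsc xk xkp hxk hupdate
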